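/- arXiv:1908.07382 — 2 statements merged into one kernel-verified Lean document; each statement's English description precedes it below -/
import Mathlib

section
/- Let H be a free monoid on finitely many generators acting continuously on a compact metric space X, let w ∈ W_∞ be an infinite word, and let ω_w(x) = ⋂_n cl{f_{w_0⋯w_k}(x) : k > n}. Then for every y ∈ ω_w(x) there exists a generator i with f_i(y) ∈ ω_w(x), and there exist z ∈ ω_w(x) and a generator j with y = f_j(z). -/
/-- The action of a word `l` on `x`: `f_{uv} = f_v ∘ f_u`. -/
def act {P X : Type*} (f : P → X → X) (l : List P) (x : X) : X :=
  l.foldl (fun y s => f s y) x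

/-- The prefix `w_0 w_1 ⋯ w_k` of an infinite word `w`. -/
def prefixWord {P : Type*} (w : ℕ → P) (k : ℕ) : List P :=
  (List.range (k + 1)).map w

/-- `ω_w(x) = ⋂ₙ cl { f_{w_0⋯w_k}(x) : k > n }`. -/
def omegaW {P X : Type*} [MetricSpace X] (f : P → X → X) (w : ℕ → P) (x : X) : Set X :=
  ⋂ n : ℕ, closure {y | ∃ k : ℕ, n < k ∧ y = act f (prefixWord w k) x}

lemma act_prefix_succ {P X : Type*} (f : P → X → X) (w : ℕ → P) (x : X) (k : ℕ) :
    act f (prefixWord w (k + 1)) x = f (w (k + 1)) (act f (prefixWord w k) x) := by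
  simp [act, prefixWord, List.range_succ]

lemma mem_omegaW_iff {P X : Type*} [MetricSpace X] (f : P → X → X) (w : ℕ → P) (x y : X) :
    y ∈ omegaW f w x ↔
      ∀ n : ℕ, ∀ ε : ℝ, 0 < ε → ∃ k, n < k ∧ dist (act f (prefixWord w k) x) y < ε := by
  simp only [omegaW, Set.mem_iInter, Metric.mem_closure_iff]
  constructor
  · intro h n ε hε
    obtain ⟨b, ⟨k, hk, rfl⟩, hd⟩ := h n ε hε
    exact ⟨k, hk, by rwa [dist_comm]⟩
  · intro h n ε hε
    obtain ⟨k, hk, hd⟩ := h n ε hε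
    exact ⟨_, ⟨k, hk, rfl⟩, by rwa [dist_comm]⟩

lemma small_eventually (δ : ℝ) (hδ : 0 < δ) : ∃ M : ℕ, ∀ m ≥ M, 1 / ((m : ℝ) + 1) < δ := by
  have := (tendsto_one_div_add_atTop_nhds_zero_nat.eventually (gt_mem_nhds hδ))
  exact Filter.eventually_atTop.mp this

/-- for the action of a free monoid with generator set `P` and an infinite
word `w`, every `y ∈ ω_w(x)` has a generator `i` with `f_i(y) ∈ ω_w(x)`, and there are
`z ∈ ω_w(x)` and a generator `j` with `y = f_j(z)`. -/
theorem omegaW_monoid_invariance {P X : Type*} [Fintype P]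
    [MetricSpace X] [CompactSpace X]
    (f : P → X → X) (hcont : ∀ s, Continuous (f s))
    (w : ℕ → P) (x : X) :
    ∀ y ∈ omegaW f w x,
      (∃ i : P, f i y ∈ omegaW f w x) ∧
      (∃ z ∈ omegaW f w x, ∃ j : P, y = f j z) := by
  intro y hy
  set a : ℕ → X := fun k => act f (prefixWord w k) x with ha
  have hsucc : ∀ k, a (k + 1) = f (w (k + 1)) (a k) := fun k => act_prefix_succ f w x k
  have key : ∀ n : ℕ, ∀ ε : ℝ, 0 < ε → ∃ k, n < k ∧ dist (a k) y < ε :=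
    (mem_omegaW_iff f w x y).mp hy
  -- construct a strictly monotone sequence of indices along which `a` converges to `y`
  let φ : ℕ → ℕ := fun n => Nat.rec (Classical.choose (key 0 1 one_pos))
    (fun m ih => Classical.choose (key ih (1 / (m + 2)) (by positivity))) n
  have hφ0 : 0 < φ 0 ∧ dist (a (φ 0)) y < 1 := Classical.choose_spec (key 0 1 one_pos)
  have hφs : ∀ m, φ m < φ (m + 1) ∧ dist (a (φ (m + 1))) y < 1 / (m + 2) :=
    fun m => Classical.choose_spec (key (φ m) (1 / (m + 2)) (by positivity))
  have hmono : StrictMono φ := strictMono_nat_of_lt_succ fun m => (hφs m).1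
  have hdist : ∀ m, dist (a (φ m)) y < 1 / ((m : ℝ) + 1) := by
    intro m
    cases m with
    | zero => simpa using hφ0.2
    | succ m => have := (hφs m).2; push_cast at this ⊢; convert this using 2; ring
  have hφ_pos : ∀ m, 1 ≤ φ m := fun m => hφ0.1.trans_le (hmono.monotone (Nat.zero_le m))
  have hφ_ge : ∀ m, m ≤ φ m := fun m => hmono.le_apply
  constructor
  · -- forward invariance
    obtain ⟨i, hi⟩ := Finite.exists_infinite_fiber (fun n => w (φ n + 1))
    rw [Set.infinite_coe_iff] at hi
    refine ⟨i, (mem_omegaW_iff f w x _).mpr ?_⟩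
    intro n ε hε
    obtain ⟨δ, hδ, hδε⟩ := Metric.continuous_iff.mp (hcont i) y ε hε
    obtain ⟨M, hM⟩ := small_eventually δ hδ
    obtain ⟨m, hm_mem, hm_gt⟩ := hi.exists_gt (max n M)
    have hmn : n < m := (le_max_left n M).trans_lt hm_gt
    have hmM : M ≤ m := ((le_max_right n M).trans_lt hm_gt).le
    refine ⟨φ m + 1, ?_, ?_⟩
    · exact Nat.lt_succ_of_lt (hmn.trans_le (hφ_ge m))
    · have h1 : dist (a (φ m)) y < δ := (hdist m).trans (hM m hmM)
      have h2 : a (φ m + 1) = f i (a (φ m)) := by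
        rw [hsucc]; rw [Set.mem_preimage, Set.mem_singleton_iff] at hm_mem; rw [hm_mem]
      rw [show act f (prefixWord w (φ m + 1)) x = a (φ m + 1) from rfl, h2]
      exact hδε _ h1
  · -- backward: find a preimage
    set c : ℕ → X := fun n => a (φ n - 1) with hc
    obtain ⟨z, ψ, hψmono, hψtend⟩ := CompactSpace.tendsto_subseq c
    obtain ⟨j, hj⟩ := Finite.exists_infinite_fiber (fun n => w (φ (ψ n)))
    rw [Set.infinite_coe_iff] at hj
    have hcz : ∀ ε : ℝ, 0 < ε → ∃ N, ∀ m ≥ N, dist (c (ψ m)) z < ε := by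
      intro ε hε
      exact Filter.eventually_atTop.mp (hψtend.eventually (Metric.ball_mem_nhds z hε))
    have haφ : ∀ m, a (φ (ψ m)) = f (w (φ (ψ m))) (c (ψ m)) := by
      intro m
      have h1 : φ (ψ m) - 1 + 1 = φ (ψ m) := Nat.succ_pred_eq_of_pos (hφ_pos _)
      conv_lhs => rw [← h1, hsucc]
      rw [h1]
    have hz : z ∈ omegaW f w x := by
      rw [mem_omegaW_iff]
      intro n ε hε
      obtain ⟨N, hN⟩ := hcz ε hε
      refine ⟨φ (ψ (max N (n + 2))) - 1, ?_, hN _ (le_max_left _ _)⟩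
      have h1 : n + 2 ≤ ψ (max N (n + 2)) := (le_max_right N (n + 2)).trans hψmono.le_apply
      have h2 : n + 2 ≤ φ (ψ (max N (n + 2))) := h1.trans (hφ_ge _)
      omega
    refine ⟨z, hz, j, eq_of_forall_dist_le ?_⟩
    intro ε hε
    obtain ⟨δ, hδ, hδε⟩ := Metric.continuous_iff.mp (hcont j) z (ε / 2) (by positivity)
    obtain ⟨N, hN⟩ := hcz δ hδ
    obtain ⟨M, hM⟩ := small_eventually (ε / 2) (by positivity)
    obtain ⟨m, hm_mem, hm_gt⟩ := hj.exists_gt (max N M)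
    have hmN : N ≤ m := ((le_max_left N M).trans_lt hm_gt).le
    have hmM : M ≤ m := ((le_max_right N M).trans_lt hm_gt).le
    have h1 : dist (a (φ (ψ m))) y < ε / 2 := by
      refine (hdist (ψ m)).trans (hM (ψ m) (hmM.trans hψmono.le_apply))
    have h2 : dist (f j (c (ψ m))) (f j z) < ε / 2 := hδε _ (hN m hmN)
    have h3 : a (φ (ψ m)) = f j (c (ψ m)) := by
      rw [haφ m]; rw [Set.mem_preimage, Set.mem_singleton_iff] at hm_mem; rw [hm_mem]
    calc dist y (f j z) ≤ dist y (a (φ (ψ m))) + dist (a (φ (ψ m))) (f j z) := dist_triangle _ _ _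
      _ = dist (a (φ (ψ m))) y + dist (f j (c (ψ m))) (f j z) := by rw [dist_comm, h3]
      _ ≤ ε / 2 + ε / 2 := by linarith
      _ = ε := by ring
end

section
/- Let X be an M-step shift of finite type over a finitely generated free group or monoid G. Then every asymptotic G-pseudo-orbit that is also a 2^{−M−1}-G-pseudo-orbit is asymptotically shadowed by some point of X. -/
/-- Reduced words over the alphabet `S` of generators and inverses (`ι` = formal inverse). -/
def Reduced {S : Type*} (ι : S → S) (l : List S) : Prop :=
  l.Chain' (fun a b => b ≠ ι a)

/-- Left multiplication of a reduced word by a letter, with cancellation. -/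
def consRed {S : Type*} [DecidableEq S] (ι : S → S) (i : S) : List S → List S
  | [] => [i]
  | a :: t => if a = ι i then t else i :: a :: t

theorem reduced_consRed {S : Type*} [DecidableEq S] (ι : S → S) (i : S) {l : List S}
    (h : Reduced ι l) : Reduced ι (consRed ι i l) := by
  cases l with
  | nil => exact List.isChain_singleton i
  | cons a t =>
    have h' : List.Chain' (fun a b => b ≠ ι a) (a :: t) := h
    by_cases hc : a = ι i
    · simpa [consRed, hc, Reduced, List.Chain'] using h'.tail
    · simp only [consRed, if_neg hc]
      exact List.isChain_cons_cons.mpr ⟨hc, h'⟩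

/-- Multiplication of reduced words: multiply the letters of `v` onto `u` from the right. -/
def mulRed {S : Type*} [DecidableEq S] (ι : S → S) (v u : List S) : List S :=
  v.foldr (consRed ι) u

theorem reduced_mulRed {S : Type*} [DecidableEq S] (ι : S → S) (v : List S) {u : List S}
    (h : Reduced ι u) : Reduced ι (mulRed ι v u) := by
  induction v with
  | nil => exact h
  | cons a t ih => exact reduced_consRed ι a ih

/-- The reduced words of the free group with inverse map `ι` on the alphabet `S`. -/
abbrev Word {S : Type*} (ι : S → S) := {l : List S // Reduced ι l}

/-- The length of a reduced word. -/
def wlen {S : Type*} {ι : S → S} (u : Word ι) : ℕ := u.1.length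

/-- The empty word (identity element). -/
def emptyWord {S : Type*} (ι : S → S) : Word ι := ⟨[], List.isChain_nil⟩

/-- A single-letter word. -/
def word1 {S : Type*} (ι : S → S) (i : S) : Word ι := ⟨[i], List.isChain_singleton i⟩

/-- The group product `v · u` as a reduced word. -/
def wmul {S : Type*} [DecidableEq S] {ι : S → S} (v : List S) (u : Word ι) : Word ι :=
  ⟨mulRed ι v u.1, reduced_mulRed ι v u.2⟩

/-- The product of two reduced words. -/
def wordMul {S : Type*} [DecidableEq S] {ι : S → S} (u v : Word ι) : Word ι :=
  wmul u.1 v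

/-- The shift `σ_v`: `σ_v(x)(u) = x(vu)`. -/
def shiftBy {S A : Type*} [DecidableEq S] {ι : S → S} (v : List S) (x : Word ι → A) :
    Word ι → A :=
  fun u => x (wmul v u)

/-- The metric on `𝒜^G`: `d(x,y) = inf({2^{-n} : x, y agree on all words of length < n})`. -/
noncomputable def shiftDist {S A : Type*} {ι : S → S} (x y : Word ι → A) : ℝ :=
  sInf {r | ∃ n : ℕ, (∀ u : Word ι, wlen u < n → x u = y u) ∧ r = (2 : ℝ) ^ (-(n : ℤ))}

/-- `B` (viewed as an `m`-block, i.e. only through its values on words of length `< m`)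
occurs in `x`. -/
def occursIn {S A : Type*} [DecidableEq S] {ι : S → S} (x : Word ι → A) (m : ℕ)
    (B : Word ι → A) : Prop :=
  ∃ u : Word ι, ∀ v : Word ι, wlen v < m → shiftBy u.1 x v = B v

/-- The shift space determined by a set `𝓕` of forbidden blocks (an element `(m, B)`
represents the `m`-block obtained by restricting `B` to words of length `< m`). -/
def shiftOf {S A : Type*} [DecidableEq S] (ι : S → S) (𝓕 : Set (ℕ × (Word ι → A))) :
    Set (Word ι → A) :=
  {x | ∀ p ∈ 𝓕, ¬ occursIn x p.1 p.2}

/-- A shift space: a subset of the full shift cut out by a set of forbidden blocks. -/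
def IsShiftSpace {S A : Type*} [DecidableEq S] (ι : S → S) (X : Set (Word ι → A)) : Prop :=
  ∃ 𝓕 : Set (ℕ × (Word ι → A)), X = shiftOf ι 𝓕

/-- A shift of finite type: cut out by finitely many forbidden blocks. -/
def IsSFT {S A : Type*} [DecidableEq S] (ι : S → S) (X : Set (Word ι → A)) : Prop :=
  ∃ 𝓕 : Set (ℕ × (Word ι → A)), 𝓕.Finite ∧ X = shiftOf ι 𝓕

/-- An `M`-step shift of finite type: cut out by a set of forbidden `M`-blocks. -/
def IsMStepSFT {S A : Type*} [DecidableEq S] (ι : S → S) (M : ℕ)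
    (X : Set (Word ι → A)) : Prop :=
  ∃ 𝓕 : Set (ℕ × (Word ι → A)), (∀ p ∈ 𝓕, p.1 = M) ∧ X = shiftOf ι 𝓕

/-! Let `x u := 𝒪 u e` (`diagonal 𝒪`). A `2^{-M-1}`-pseudo-orbit satisfies
`𝒪 u (i w) = 𝒪 (u i) w` for all `|w| ≤ M + 1`. Peeling off the letters of `w` one at a time gives
`𝒪 u w = x (u w)` whenever the agreement radius along the path `u, u w₁, u w₁ w₂, …` stays above
the length of what is left of `w`. With the constant radius `M` this says that every `M`-window
of `x` is a window of some `𝒪 u ∈ X`, so `x ∈ X`; for an asymptotic pseudo-orbit the radius tends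
to infinity with `|u|`, so `σ_u x` and `𝒪 u` agree on larger and larger balls. -/

section Words

variable {S : Type*} [DecidableEq S] {ι : S → S}

lemma consRed_of_reduced_cons {i : S} {l : List S} (h : Reduced ι (i :: l)) :
    consRed ι i l = i :: l := by
  cases l with
  | nil => rfl
  | cons a t => simp [consRed, (List.isChain_cons_cons.mp h).1]

lemma consRed_inv_consRed (hι : ∀ s, ι (ι s) = s) (i : S) {l : List S} (h : Reduced ι l) :
    consRed ι (ι i) (consRed ι i l) = l := by
  cases l with
  | nil => simp [consRed, hι]
  | cons a t =>
    by_cases hc : a = ι i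
    · subst hc
      simp only [consRed]
      cases t with
      | nil => rfl
      | cons b t => simp [(List.isChain_cons_cons.mp h).1]
    · simp [consRed, hc, hι]

lemma length_consRed_le (i : S) (l : List S) : (consRed ι i l).length ≤ l.length + 1 := by
  cases l with
  | nil => simp [consRed]
  | cons a t => simp only [consRed]; split_ifs <;> simp only [List.length_cons] <;> omega

lemma length_mulRed_le (v u : List S) : (mulRed ι v u).length ≤ v.length + u.length := by
  induction v with
  | nil => simp [mulRed]
  | cons a t ih =>
    have := length_consRed_le (ι := ι) a (mulRed ι t u)
    simp only [mulRed, List.foldr_cons, List.length_cons] at this ih ⊢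
    omega

lemma mulRed_consRed (hι : ∀ s, ι (ι s) = s) (i : S) (v : List S) {u : List S}
    (hu : Reduced ι u) : mulRed ι (consRed ι i v) u = consRed ι i (mulRed ι v u) := by
  cases v with
  | nil => rfl
  | cons a t =>
    by_cases hc : a = ι i
    · subst hc
      simp only [consRed]
      have h := consRed_inv_consRed hι (ι i) (reduced_mulRed ι t hu)
      rw [hι] at h
      exact h.symm
    · simp only [consRed, if_neg hc]
      rfl

lemma mulRed_assoc (hι : ∀ s, ι (ι s) = s) (a b : List S) {c : List S} (hc : Reduced ι c) :
    mulRed ι (mulRed ι a b) c = mulRed ι a (mulRed ι b c) := by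
  induction a with
  | nil => rfl
  | cons i t ih =>
    change mulRed ι (consRed ι i (mulRed ι t b)) c = consRed ι i (mulRed ι t (mulRed ι b c))
    rw [mulRed_consRed hι i _ hc, ih]

lemma mulRed_nil {u : List S} (hu : Reduced ι u) : mulRed ι u [] = u := by
  induction u with
  | nil => rfl
  | cons a t ih =>
    change consRed ι a (mulRed ι t []) = a :: t
    rw [ih hu.tail, consRed_of_reduced_cons hu]

lemma wordMul_assoc (hι : ∀ s, ι (ι s) = s) (u v w : Word ι) :
    wordMul (wordMul u v) w = wordMul u (wordMul v w) :=
  Subtype.ext (mulRed_assoc hι u.1 v.1 w.2)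

lemma wordMul_emptyWord (u : Word ι) : wordMul u (emptyWord ι) = u :=
  Subtype.ext (mulRed_nil u.2)

lemma word1_wordMul_of_reduced_cons {i : S} {l : List S} (h : Reduced ι (i :: l)) :
    wordMul (word1 ι i) ⟨l, h.tail⟩ = ⟨i :: l, h⟩ :=
  Subtype.ext (consRed_of_reduced_cons h)

lemma wlen_le_wlen_wordMul_word1 (hι : ∀ s, ι (ι s) = s) (u : Word ι) (i : S) :
    wlen u ≤ wlen (wordMul u (word1 ι i)) + 1 := by
  have hinv : wordMul (word1 ι i) (word1 ι (ι i)) = emptyWord ι :=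
    Subtype.ext (by simp [wordMul, wmul, word1, mulRed, consRed, emptyWord])
  have hcancel : wordMul (wordMul u (word1 ι i)) (word1 ι (ι i)) = u := by
    rw [wordMul_assoc hι, hinv, wordMul_emptyWord]
  calc wlen u = wlen (wordMul (wordMul u (word1 ι i)) (word1 ι (ι i))) := by rw [hcancel]
    _ ≤ wlen (wordMul u (word1 ι i)) + 1 := length_mulRed_le _ _

end Words

section Metric

variable {S A : Type*} {ι : S → S}

lemma eq_of_shiftDist_lt {x y : Word ι → A} {k : ℕ} (h : shiftDist x y < (2 : ℝ) ^ (-(k : ℤ)))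
    {u : Word ι} (hu : wlen u ≤ k) : x u = y u := by
  obtain ⟨r, ⟨n, hagree, rfl⟩, hr⟩ := exists_lt_of_csInf_lt (by exact ⟨1, 0, by simp, by simp⟩) h
  have hkn : k < n := by
    by_contra! hnk
    exact hr.not_ge (zpow_le_zpow_right₀ one_le_two (by omega))
  exact hagree u (by omega)

lemma shiftDist_le_of_eq {x y : Word ι → A} {k : ℕ} (h : ∀ u : Word ι, wlen u < k → x u = y u) :
    shiftDist x y ≤ (2 : ℝ) ^ (-(k : ℤ)) :=
  csInf_le ⟨0, by rintro r ⟨n, -, rfl⟩; positivity⟩ ⟨k, h, rfl⟩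

end Metric

section Diagonal

variable {S A : Type*} [DecidableEq S] {ι : S → S}

def diagonal (𝒪 : Word ι → Word ι → A) : Word ι → A := fun u => 𝒪 u (emptyWord ι)

lemma shiftBy_diagonal_eq (hι : ∀ s, ι (ι s) = s) {𝒪 : Word ι → Word ι → A}
    {r : Word ι → ℕ} (hr : ∀ u i, r u ≤ r (wordMul u (word1 ι i)) + 1)
    (hagree : ∀ u i w, wlen w < r u → shiftBy [i] (𝒪 u) w = 𝒪 (wordMul u (word1 ι i)) w)
    (u w : Word ι) (hw : wlen w ≤ r u) : shiftBy u.1 (diagonal 𝒪) w = 𝒪 u w := by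
  change diagonal 𝒪 (wordMul u w) = 𝒪 u w
  obtain ⟨l, hl⟩ := w
  induction l generalizing u with
  | nil =>
    change diagonal 𝒪 (wordMul u (emptyWord ι)) = 𝒪 u (emptyWord ι)
    rw [wordMul_emptyWord]
    rfl
  | cons i l ih =>
    have hlen : l.length + 1 ≤ r u := hw
    have hstep := hagree u i ⟨l, hl.tail⟩ (by exact hlen)
    change 𝒪 u (wordMul (word1 ι i) ⟨l, hl.tail⟩) = _ at hstep
    rw [word1_wordMul_of_reduced_cons hl] at hstep
    have hrest : l.length ≤ r (wordMul u (word1 ι i)) := by have := hr u i; omega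
    rw [hstep, ← ih _ hl.tail hrest, wordMul_assoc hι, word1_wordMul_of_reduced_cons hl]

lemma diagonal_mem_of_isMStepSFT (hι : ∀ s, ι (ι s) = s) {M : ℕ} {X : Set (Word ι → A)}
    (hX : IsMStepSFT ι M X) {𝒪 : Word ι → Word ι → A} (h𝒪 : ∀ u, 𝒪 u ∈ X)
    (hagree : ∀ u i w, wlen w < M → shiftBy [i] (𝒪 u) w = 𝒪 (wordMul u (word1 ι i)) w) :
    diagonal 𝒪 ∈ X := by
  obtain ⟨𝓕, h𝓕M, rfl⟩ := hX
  rintro ⟨m, B⟩ hB ⟨u, hocc⟩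
  refine h𝒪 u _ hB ⟨emptyWord ι, fun w hw => ?_⟩
  have hwM : wlen w ≤ M := (h𝓕M _ hB ▸ hw).le
  rw [← hocc w hw]
  exact (shiftBy_diagonal_eq hι (r := fun _ => M) (fun _ _ => by omega) hagree u w hwM).symm

end Diagonal

theorem asymptotic_shadowing_in_MStepSFT_general {S A : Type*} [DecidableEq S]
    (ι : S → S) (hι : ∀ s, ι (ι s) = s)
    (M : ℕ) (X : Set (Word ι → A)) (hX : IsMStepSFT ι M X)
    (𝒪 : Word ι → (Word ι → A)) (h𝒪 : ∀ u, 𝒪 u ∈ X)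
    (hpo : ∀ (u : Word ι) (i : S),
      shiftDist (shiftBy [i] (𝒪 u)) (𝒪 (wordMul u (word1 ι i))) < (2 : ℝ) ^ (-(M + 1 : ℤ)))
    (hasym : ∀ δ > (0 : ℝ), ∃ n : ℕ, ∀ u : Word ι, n < wlen u → ∀ i : S,
      shiftDist (shiftBy [i] (𝒪 u)) (𝒪 (wordMul u (word1 ι i))) < δ) :
    ∃ x ∈ X, ∀ ε > (0 : ℝ), ∃ n : ℕ, ∀ u : Word ι, n < wlen u →
      shiftDist (shiftBy u.1 x) (𝒪 u) < ε := by
  refine ⟨diagonal 𝒪, diagonal_mem_of_isMStepSFT hι hX h𝒪 fun u i w hw =>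
    eq_of_shiftDist_lt (k := M + 1) (by exact_mod_cast hpo u i) (by omega), fun ε hε => ?_⟩
  obtain ⟨m, hm⟩ : ∃ m : ℕ, (2 : ℝ) ^ (-(m : ℤ)) < ε := by
    obtain ⟨m, hm⟩ := exists_pow_lt_of_lt_one hε one_half_lt_one
    exact ⟨m, by simpa [zpow_neg, inv_pow] using hm⟩
  obtain ⟨n, hn⟩ := hasym _ (by positivity : (0 : ℝ) < 2 ^ (-(m : ℤ)))
  have hr (u : Word ι) (i : S) :
      min m (wlen u - n) ≤ min m (wlen (wordMul u (word1 ι i)) - n) + 1 := by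
    have := wlen_le_wlen_wordMul_word1 hι u i
    omega
  refine ⟨n + m, fun u hu => (shiftDist_le_of_eq fun w hw => ?_).trans_lt hm⟩
  exact shiftBy_diagonal_eq hι hr
    (fun u i w hw => eq_of_shiftDist_lt (hn u (by omega) i) (by omega)) u w (by omega)

/-- in an `M`-step shift of finite type, every asymptotic pseudo-orbit
which is also a `2^{-M-1}`-pseudo-orbit is asymptotically shadowed by a point of `X`. -/
theorem asymptotic_shadowing_in_MStepSFT {S A : Type*} [DecidableEq S]
    [Fintype S] [Fintype A]
    (ι : S → S) (hι : ∀ s, ι (ι s) = s) (hιne : ∀ s, ι s ≠ s)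
    (M : ℕ) (X : Set (Word ι → A)) (hX : IsMStepSFT ι M X)
    (𝒪 : Word ι → (Word ι → A)) (h𝒪 : ∀ u, 𝒪 u ∈ X)
    (hpo : ∀ (u : Word ι) (i : S),
      shiftDist (shiftBy [i] (𝒪 u)) (𝒪 (wordMul u (word1 ι i))) < (2 : ℝ) ^ (-(M + 1 : ℤ)))
    (hasym : ∀ δ > (0 : ℝ), ∃ n : ℕ, ∀ u : Word ι, n < wlen u → ∀ i : S,
      shiftDist (shiftBy [i] (𝒪 u)) (𝒪 (wordMul u (word1 ι i))) < δ) :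
    ∃ x ∈ X, ∀ ε > (0 : ℝ), ∃ n : ℕ, ∀ u : Word ι, n < wlen u →
      shiftDist (shiftBy u.1 x) (𝒪 u) < ε :=
  asymptotic_shadowing_in_MStepSFT_general ι hι M X hX 𝒪 h𝒪 hpo hasym
end
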